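/- Let g : ℝ → ℝ be of class C⁴, fix x ∈ ℝ and κ ∈ ℝ. Apply the κ-interpolation formulas directly to g (flux reconstruction). Then (1/(2h))·( (uL(g,h) + uR(g,h)) − (uL⁻(g,h) + uR⁻(g,h)) ) = g'(x) + ((3κ−1)/12)·g'''(x)·h² + O(h³) as h → 0⁺; in particular, for κ = 1/3 the reconstructed flux balance is a third-order approximation of the pointwise derivative g'(x) (third-order accuracy of the QUICKEST scheme with direct flux reconstruction). -/

import Mathlib

open Asymptotics Filter Set MeasureTheory

noncomputable def uL (κ x : ℝ) (v : ℝ → ℝ) (h : ℝ) : ℝ :=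
  (v x + v (x + h)) / 2 - ((1 - κ) / 4) * (v (x + h) - 2 * v x + v (x - h))

noncomputable def uR (κ x : ℝ) (v : ℝ → ℝ) (h : ℝ) : ℝ :=
  (v (x + h) + v x) / 2 - ((1 - κ) / 4) * (v (x + 2 * h) - 2 * v (x + h) + v x)

/-- Left-face interpolated value from the left: same formula with `x` replaced by `x - h`. -/
noncomputable def uLm (κ x : ℝ) (v : ℝ → ℝ) (h : ℝ) : ℝ := uL κ (x - h) v h

/-- Left-face interpolated value from the right: same formula with `x` replaced by `x - h`. -/
noncomputable def uRm (κ x : ℝ) (v : ℝ → ℝ) (h : ℝ) : ℝ := uR κ (x - h) v h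

open Topology

/-! Write `g (x + t) = P t + R t` with `P` the cubic Taylor polynomial of `g` at `x`; comparing
with the quartic Taylor polynomial gives `R t = O(t⁴)`. The flux balance is the linear combination
`v h - v (-h) - (1 - κ)/4 · (v (2h) - 2 v h + 2 v (-h) - v (-2h))` of `v t = g (x + t)`: on `P` it
equals `2h g'(x) + (3κ - 1)/6 · g'''(x) h³` exactly, on `R` it is `O(h⁴)`. Dividing by `2h`
gives the claim. -/

noncomputable def cubicTaylorRemainder (g : ℝ → ℝ) (x t : ℝ) : ℝ :=
  g (x + t) - (g x + deriv g x * t + iteratedDeriv 2 g x / 2 * t ^ 2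
    + iteratedDeriv 3 g x / 6 * t ^ 3)

theorem cubicTaylorRemainder_isBigO {g : ℝ → ℝ} (hg : ContDiff ℝ 4 g) (x : ℝ) :
    cubicTaylorRemainder g x =O[𝓝 0] fun t => t ^ 4 := by
  have hshift : Tendsto (fun t : ℝ => x + t) (𝓝 0) (𝓝 x) := by
    simpa using tendsto_const_nhds.add (tendsto_id (x := 𝓝 (0 : ℝ)))
  have htaylor : (fun t => g (x + t) - taylorWithinEval g 4 univ x (x + t)) =O[𝓝 0]
      fun t => t ^ 4 := by
    simpa [Function.comp_def] using ((taylor_isLittleO_univ hg).comp_tendsto hshift).isBigO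
  have hquartic : (fun t : ℝ => iteratedDeriv 4 g x / 24 * t ^ 4) =O[𝓝 0] fun t => t ^ 4 :=
    (isBigO_refl _ _).const_mul_left _
  refine (htaylor.add hquartic).congr_left fun t => ?_
  simp only [cubicTaylorRemainder, taylor_within_apply, Finset.sum_range_succ,
    Finset.sum_range_zero, iteratedDerivWithin_univ, iteratedDeriv_zero, iteratedDeriv_one,
    add_sub_cancel_left, smul_eq_mul, Nat.factorial, Nat.cast_one, Nat.cast_mul,
    Nat.succ_eq_add_one]
  ring

theorem Asymptotics.IsBigO.comp_const_mul_pow {f : ℝ → ℝ} {n : ℕ}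
    (hf : f =O[𝓝 0] fun t => t ^ n) (k : ℝ) :
    (fun h => f (k * h)) =O[𝓝 0] fun h => h ^ n := by
  have hk : Tendsto (fun h : ℝ => k * h) (𝓝 0) (𝓝 0) := by
    simpa using (tendsto_id (x := 𝓝 (0 : ℝ))).const_mul k
  refine (hf.comp_tendsto hk).trans ?_
  simpa [Function.comp_def, mul_pow] using
    (isBigO_refl (fun h : ℝ => h ^ n) _).const_mul_left (k ^ n)

theorem fluxBalance_eq (κ x : ℝ) (g : ℝ → ℝ) (h : ℝ) :
    (uL κ x g h + uR κ x g h) - (uLm κ x g h + uRm κ x g h)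
      = 2 * h * deriv g x + (3 * κ - 1) / 6 * iteratedDeriv 3 g x * h ^ 3
        + (cubicTaylorRemainder g x h - cubicTaylorRemainder g x (-h)
          - (1 - κ) / 4 * (cubicTaylorRemainder g x (2 * h) - 2 * cubicTaylorRemainder g x h
            + 2 * cubicTaylorRemainder g x (-h) - cubicTaylorRemainder g x (-2 * h))) := by
  simp only [uL, uR, uLm, uRm, cubicTaylorRemainder]
  ring_nf

theorem fluxBalance_sub_isBigO {g : ℝ → ℝ} (hg : ContDiff ℝ 4 g) (x κ : ℝ) :
    (fun h => (uL κ x g h + uR κ x g h) - (uLm κ x g h + uRm κ x g h)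
      - (2 * h * deriv g x + (3 * κ - 1) / 6 * iteratedDeriv 3 g x * h ^ 3))
      =O[𝓝 0] fun h => h ^ 4 := by
  have hR := (cubicTaylorRemainder_isBigO hg x).comp_const_mul_pow
  have hcomb := ((hR 1).sub (hR (-1))).sub
    (((((hR 2).sub ((hR 1).const_mul_left 2)).add ((hR (-1)).const_mul_left 2)).sub
      (hR (-2))).const_mul_left ((1 - κ) / 4))
  refine hcomb.congr_left fun h => ?_
  rw [fluxBalance_eq]
  simp only [one_mul, neg_mul]
  ring

theorem fluxQuotient_sub_isBigO {g : ℝ → ℝ} (hg : ContDiff ℝ 4 g) (x κ : ℝ) :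
    (fun h : ℝ => (1 / (2 * h)) * ((uL κ x g h + uR κ x g h) - (uLm κ x g h + uRm κ x g h))
      - (deriv g x + ((3 * κ - 1) / 12) * iteratedDeriv 3 g x * h ^ 2))
      =O[𝓝[≠] 0] fun h => h ^ 3 := by
  have hquot := (isBigO_refl (fun h : ℝ => 1 / (2 * h)) (𝓝[≠] 0)).mul
    ((fluxBalance_sub_isBigO hg x κ).mono nhdsWithin_le_nhds)
  have hcubic : (fun h : ℝ => 1 / (2 * h) * h ^ 4) =O[𝓝[≠] 0] fun h => h ^ 3 :=
    ((isBigO_refl (fun h : ℝ => h ^ 3) _).const_mul_left (1 / 2)).congr_left fun h => by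
      rcases eq_or_ne h 0 with rfl | hh
      · simp
      · field_simp
  refine (hquot.trans hcubic).congr' ?_ EventuallyEq.rfl
  filter_upwards [self_mem_nhdsWithin] with h (hh : h ≠ 0)
  field_simp
  ring

theorem quickest_flux_reconstruction (g : ℝ → ℝ) (hg : ContDiff ℝ 4 g) (x κ : ℝ) :
    ((fun h : ℝ =>
        (1 / (2 * h)) * ((uL κ x g h + uR κ x g h) - (uLm κ x g h + uRm κ x g h))
        - (deriv g x + ((3 * κ - 1) / 12) * iteratedDeriv 3 g x * h ^ 2))
      =O[nhdsWithin 0 (Set.Ioi 0)] fun h : ℝ => h ^ 3) ∧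
    (κ = 1 / 3 →
      (fun h : ℝ =>
        (1 / (2 * h)) * ((uL κ x g h + uR κ x g h) - (uLm κ x g h + uRm κ x g h))
        - deriv g x)
      =O[nhdsWithin 0 (Set.Ioi 0)] fun h : ℝ => h ^ 3) := by
  have hmain := (fluxQuotient_sub_isBigO hg x κ).mono
    (nhdsWithin_mono 0 fun h (hh : h ∈ Ioi 0) => ne_of_gt hh)
  refine ⟨hmain, ?_⟩
  rintro rfl
  simpa using hmain
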